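/- arXiv:2002.02251 — 5 statements merged into one kernel-verified Lean document; each statement's English description precedes it below -/
import Mathlib

section
/- For every a ∈ A_reg, the Casimir element Ω admits the Cartan factorisation Ω = Σⱼ xⱼ² + ½ Σ_{α∈R} ((a^α + a^{−α})/(a^α − a^{−α})) t_α + Σ_{α∈R} ( Ad_{a⁻¹}(y_α²) − (a^α + a^{−α}) Ad_{a⁻¹}(y_α) y_α + y_α² ) / (a^α − a^{−α})², where y_α = e_α − e₋α. -/
/-!
Write `A = e_α`, `B = e_{−α}` and `q = a^α`, so that `Ad_{a⁻¹} y_α = q⁻¹A − qB`. Once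
`t_α = AB − BA` is substituted, the `α`-summand of the right-hand side collapses to the
symmetrised product `½(AB + BA)`: this is a polynomial identity in `A`, `B` that only uses
`q q⁻¹ = 1` and needs no commutation relations. Summing over the roots, the involution `α ↦ −α`
turns `Σ ½(e_α e_{−α} + e_{−α} e_α)` back into `Σ e_α e_{−α}`.
-/

open UniversalEnvelopingAlgebra

theorem Function.Involutive.sum_comp_swap {α M : Type*} [Fintype α] [AddCommMonoid M]
    {σ : α → α} (hσ : Function.Involutive σ) (g : α → α → M) :
    ∑ i, g (σ i) i = ∑ i, g i (σ i) := by
  simpa only [Function.Involutive.coe_toPerm, hσ _] using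
    (Equiv.sum_comp (hσ.toPerm σ) fun i => g (σ i) i).symm

theorem Function.Involutive.sum_symmetrize {α K M : Type*} [Fintype α] [DivisionRing K]
    [NeZero (2 : K)] [AddCommGroup M] [Module K M] {σ : α → α} (hσ : Function.Involutive σ)
    (g : α → α → M) :
    ∑ i, (2 : K)⁻¹ • (g i (σ i) + g (σ i) i) = ∑ i, g i (σ i) := by
  rw [← Finset.smul_sum, Finset.sum_add_distrib, hσ.sum_comp_swap, ← two_smul K, smul_smul,
    inv_mul_cancel₀ two_ne_zero, one_smul]

theorem cartan_summand_eq_half_anticommutator {K U : Type*} [Field K] [NeZero (2 : K)] [Ring U]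
    [Algebra K U] (A B : U) {q : K} (hq : q - q⁻¹ ≠ 0) :
    ((q + q⁻¹) / (2 * (q - q⁻¹))) • (A * B - B * A)
      + ((q - q⁻¹) ^ 2)⁻¹ • ((q⁻¹ • A - q • B) ^ 2
          - (q + q⁻¹) • ((q⁻¹ • A - q • B) * (A - B)) + (A - B) ^ 2)
    = (2 : K)⁻¹ • (A * B + B * A) := by
  have hq0 : q ≠ 0 := fun h => hq (by simp [h])
  have hq2 : q ^ 2 - 1 ≠ 0 := by
    contrapose! hq
    field_simp
    linear_combination hq
  have hquad : (q⁻¹ • A - q • B) ^ 2 - (q + q⁻¹) • ((q⁻¹ • A - q • B) * (A - B)) + (A - B) ^ 2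
      = (q⁻¹ ^ 2 - 1) • (A * B) + (q ^ 2 - 1) • (B * A) := by
    simp only [pow_two, sub_mul, mul_sub, smul_mul_assoc, mul_smul_comm, smul_smul, smul_sub]
    match_scalars <;> field_simp <;> ring
  rw [hquad]
  match_scalars <;> field_simp <;> ring

theorem UniversalEnvelopingAlgebra.ι_lie {R L : Type*} [CommRing R] [LieRing L] [LieAlgebra R L]
    (a b : L) : ι R ⁅a, b⁆ = ι R a * ι R b - ι R b * ι R a := by
  let := LieRing.ofAssociativeRing (A := UniversalEnvelopingAlgebra R L)
  rw [LieHom.map_lie, Ring.lie_def]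

theorem stmt_4_general (L : Type*) [LieRing L] [LieAlgebra ℂ L]
    (rk : ℕ) (x : Fin rk → L)
    (ι' : Type*) [Fintype ι']
    (nve : ι' ≃ ι') (hinv : ∀ i, nve (nve i) = i)
    (e t : ι' → L)
    (hbr : ∀ i, ⁅e i, e (nve i)⁆ = t i)
    (p : ι' → ℂ)
    (hpreg : ∀ i, p i - (p i)⁻¹ ≠ 0)
    (hpn : ∀ i, p (nve i) = (p i)⁻¹)
    (Φ : UniversalEnvelopingAlgebra ℂ L →ₐ[ℂ] UniversalEnvelopingAlgebra ℂ L)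
    (hΦe : ∀ i, Φ (UniversalEnvelopingAlgebra.ι ℂ (e i))
        = (p i)⁻¹ • UniversalEnvelopingAlgebra.ι ℂ (e i)) :
    (∑ j, (UniversalEnvelopingAlgebra.ι ℂ (x j) : UniversalEnvelopingAlgebra ℂ L)^2)
        + ∑ i, (UniversalEnvelopingAlgebra.ι ℂ (e i))
            * (UniversalEnvelopingAlgebra.ι ℂ (e (nve i)))
      = (∑ j, (UniversalEnvelopingAlgebra.ι ℂ (x j))^2)
        + ∑ i, ((p i + (p i)⁻¹)/(2 * (p i - (p i)⁻¹)))
            • (UniversalEnvelopingAlgebra.ι ℂ (t i))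
        + ∑ i, ((p i - (p i)⁻¹)^2)⁻¹
            • (Φ ((UniversalEnvelopingAlgebra.ι ℂ (e i - e (nve i)))^2)
               - (p i + (p i)⁻¹) • (Φ (UniversalEnvelopingAlgebra.ι ℂ (e i - e (nve i)))
                    * UniversalEnvelopingAlgebra.ι ℂ (e i - e (nve i)))
               + (UniversalEnvelopingAlgebra.ι ℂ (e i - e (nve i)))^2) := by
  have hΦy : ∀ i, Φ (ι ℂ (e i - e (nve i))) = (p i)⁻¹ • ι ℂ (e i) - p i • ι ℂ (e (nve i)) := by
    intro i
    rw [map_sub, map_sub, hΦe, hΦe, hpn, inv_inv]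
  rw [add_assoc, ← Finset.sum_add_distrib]
  congr 1
  refine (Function.Involutive.sum_symmetrize (K := ℂ) hinv
    fun i j => ι ℂ (e i) * ι ℂ (e j)).symm.trans (Finset.sum_congr rfl fun i _ => ?_)
  rw [map_pow, hΦy, map_sub, ← hbr, ι_lie]
  exact (cartan_summand_eq_half_anticommutator _ _ (hpreg i)).symm

/-- Cartan factorisation of the Casimir: for `a ∈ A_reg`,
`Ω = Σⱼ xⱼ² + ½ Σ_{α∈R} ((a^α+a^{−α})/(a^α−a^{−α})) t_α
   + Σ_{α∈R} (Ad_{a⁻¹}(y_α²) − (a^α+a^{−α}) Ad_{a⁻¹}(y_α) y_α + y_α²)/(a^α−a^{−α})²`,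
with `y_α = e_α − e_{−α}`.  Roots are encoded via `ι'` with fixed-point-free involution
`nve` (`α ↦ −α`), `⁅e i, e (nve i)⁆ = t i`, `t (nve i) = −t i`; `p i = a^{α_i}` with
`p (nve i) = (p i)⁻¹`, `p i ≠ 0`, and regularity `p i − (p i)⁻¹ ≠ 0`.  `Ad_{a⁻¹}` is the
algebra automorphism `Φ` of `U(g)` with `Φ(e_α) = a^{−α} e_α` and fixing the Cartan part. -/
theorem stmt_4 (L : Type*) [LieRing L] [LieAlgebra ℂ L]
    [Module.Free ℂ L] [Module.Finite ℂ L]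
    (rk : ℕ) (x : Fin rk → L)
    (hortho : ∀ j k, (killingForm ℂ L) (x j) (x k) = if j = k then 1 else 0)
    (ι' : Type*) [Fintype ι'] [DecidableEq ι']
    (nve : ι' ≃ ι') (hinv : ∀ i, nve (nve i) = i) (hfix : ∀ i, nve i ≠ i)
    (e t : ι' → L)
    (ht : ∀ i, t (nve i) = - t i)
    (hbr : ∀ i, ⁅e i, e (nve i)⁆ = t i)
    (p : ι' → ℂ)
    (hp0 : ∀ i, p i ≠ 0) (hpreg : ∀ i, p i - (p i)⁻¹ ≠ 0)
    (hpn : ∀ i, p (nve i) = (p i)⁻¹)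
    (Φ : UniversalEnvelopingAlgebra ℂ L →ₐ[ℂ] UniversalEnvelopingAlgebra ℂ L)
    (hΦe : ∀ i, Φ (UniversalEnvelopingAlgebra.ι ℂ (e i))
        = (p i)⁻¹ • UniversalEnvelopingAlgebra.ι ℂ (e i))
    (hΦx : ∀ j, Φ (UniversalEnvelopingAlgebra.ι ℂ (x j))
        = UniversalEnvelopingAlgebra.ι ℂ (x j))
    (hΦt : ∀ i, Φ (UniversalEnvelopingAlgebra.ι ℂ (t i))
        = UniversalEnvelopingAlgebra.ι ℂ (t i)) :
    (∑ j, (UniversalEnvelopingAlgebra.ι ℂ (x j) : UniversalEnvelopingAlgebra ℂ L)^2)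
        + ∑ i, (UniversalEnvelopingAlgebra.ι ℂ (e i))
            * (UniversalEnvelopingAlgebra.ι ℂ (e (nve i)))
      = (∑ j, (UniversalEnvelopingAlgebra.ι ℂ (x j))^2)
        + ∑ i, ((p i + (p i)⁻¹)/(2 * (p i - (p i)⁻¹)))
            • (UniversalEnvelopingAlgebra.ι ℂ (t i))
        + ∑ i, ((p i - (p i)⁻¹)^2)⁻¹
            • (Φ ((UniversalEnvelopingAlgebra.ι ℂ (e i - e (nve i)))^2)
               - (p i + (p i)⁻¹) • (Φ (UniversalEnvelopingAlgebra.ι ℂ (e i - e (nve i)))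
                    * UniversalEnvelopingAlgebra.ι ℂ (e i - e (nve i)))
               + (UniversalEnvelopingAlgebra.ι ℂ (e i - e (nve i)))^2) :=
  stmt_4_general L rk x ι' nve hinv e t hbr p hpreg hpn Φ hΦe
end

section
/- With r(a) the Felder trigonometric dynamical r-matrix and r^±(a) := ±r(a) + (1⊗θ)(r₂₁(a)), one has the explicit formulas r⁺(a) = Σ_{α∈R} y_α ⊗ e_α / (1 − a^{−2α}) and r⁻(a) = Σⱼ xⱼ⊗xⱼ + Σ_{α∈R} (e_α + e₋α) ⊗ e_α / (1 − a^{−2α}). In particular r⁺(a) ∈ k ⊗ g and r⁻(a) ∈ p ⊗ g, where k and p are the +1 and −1 eigenspaces of θ. -/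
open TensorProduct

/-- With `r` Felder's trigonometric dynamical r-matrix at `a ∈ A_reg` and the folded
r-matrices `r^± := ±r + (1⊗θ)(r₂₁)` (`r₂₁` the flip of `r`), one has
`r⁺ = Σ_{α∈R} y_α ⊗ e_α/(1−a^{−2α})` and
`r⁻ = Σⱼ xⱼ⊗xⱼ + Σ_{α∈R} (e_α+e_{−α}) ⊗ e_α/(1−a^{−2α})`, where `y_α = e_α − e_{−α}`.
In particular `r⁺ ∈ k ⊗ g` and `r⁻ ∈ p ⊗ g`, with `k`, `p` the `(+1)`- and
`(−1)`-eigenspaces of the Chevalley involution `θ`. -/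
theorem stmt_8 (L : Type*) [LieRing L] [LieAlgebra ℂ L]
    (rk : ℕ) (x : Fin rk → L)
    (ι' : Type*) [Fintype ι'] [DecidableEq ι']
    (nve : ι' ≃ ι') (hinv : ∀ i, nve (nve i) = i) (hfix : ∀ i, nve i ≠ i)
    (e : ι' → L)
    (θ : L →ₗ[ℂ] L)
    (hθe : ∀ i, θ (e i) = - e (nve i)) (hθx : ∀ j, θ (x j) = - x j)
    (c : ι' → ℂ) (hc0 : ∀ i, c i ≠ 0) (hc1 : ∀ i, c i ≠ 1)
    (hcn : ∀ i, c (nve i) = (c i)⁻¹)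
    (r rplus rminus : L ⊗[ℂ] L)
    (hr : r = (-(2:ℂ)⁻¹) • (∑ j, x j ⊗ₜ[ℂ] x j)
        - ∑ i, (1/(1 - c i)) • (e (nve i) ⊗ₜ[ℂ] e i))
    (hrp : rplus = r + TensorProduct.map LinearMap.id θ ((TensorProduct.comm ℂ L L) r))
    (hrm : rminus = -r + TensorProduct.map LinearMap.id θ ((TensorProduct.comm ℂ L L) r)) :
    rplus = ∑ i, (1/(1 - c i)) • ((e i - e (nve i)) ⊗ₜ[ℂ] e i)
    ∧ rminus = (∑ j, x j ⊗ₜ[ℂ] x j)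
        + ∑ i, (1/(1 - c i)) • ((e i + e (nve i)) ⊗ₜ[ℂ] e i)
    ∧ rplus ∈ LinearMap.range
        (TensorProduct.mapIncl (LinearMap.ker (θ - LinearMap.id)) (⊤ : Submodule ℂ L))
    ∧ rminus ∈ LinearMap.range
        (TensorProduct.mapIncl (LinearMap.ker (θ + LinearMap.id)) (⊤ : Submodule ℂ L)) := by

  have hF : TensorProduct.map LinearMap.id θ ((TensorProduct.comm ℂ L L) r)
      = (2:ℂ)⁻¹ • (∑ j, x j ⊗ₜ[ℂ] x j) + ∑ i, (1/(1 - c i)) • (e i ⊗ₜ[ℂ] e i) := by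
    rw [hr]
    simp only [map_sub, map_smul, map_sum, TensorProduct.comm_tmul,
      TensorProduct.map_tmul, LinearMap.id_coe, id_eq, hθe, hθx, hinv,
      TensorProduct.tmul_neg, smul_neg, Finset.sum_neg_distrib]
    rw [sub_neg_eq_add, neg_smul, neg_neg]
  have h1 : rplus = ∑ i, (1/(1 - c i)) • ((e i - e (nve i)) ⊗ₜ[ℂ] e i) := by
    rw [hrp, hF, hr]
    simp only [TensorProduct.sub_tmul, smul_sub]
    rw [Finset.sum_sub_distrib]
    module
  have h2 : rminus = (∑ j, x j ⊗ₜ[ℂ] x j)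
      + ∑ i, (1/(1 - c i)) • ((e i + e (nve i)) ⊗ₜ[ℂ] e i) := by
    rw [hrm, hF, hr]
    simp only [TensorProduct.add_tmul, smul_add]
    rw [Finset.sum_add_distrib]
    module
  refine ⟨h1, h2, ?_, ?_⟩
  · rw [h1]
    apply Submodule.sum_mem
    intro i _
    apply Submodule.smul_mem
    have hk : e i - e (nve i) ∈ LinearMap.ker (θ - LinearMap.id) := by
      simp [LinearMap.mem_ker, map_sub, hθe, hinv, sub_eq_zero]
      abel
    exact ⟨(⟨e i - e (nve i), hk⟩ : LinearMap.ker (θ - LinearMap.id)) ⊗ₜ[ℂ]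
      (⟨e i, trivial⟩ : (⊤ : Submodule ℂ L)), rfl⟩
  · rw [h2]
    apply Submodule.add_mem
    · apply Submodule.sum_mem
      intro j _
      have hk : x j ∈ LinearMap.ker (θ + LinearMap.id) := by
        simp [LinearMap.mem_ker, hθx]
      exact ⟨(⟨x j, hk⟩ : LinearMap.ker (θ + LinearMap.id)) ⊗ₜ[ℂ]
        (⟨x j, trivial⟩ : (⊤ : Submodule ℂ L)), rfl⟩
    · apply Submodule.sum_mem
      intro i _
      apply Submodule.smul_mem
      have hk : e i + e (nve i) ∈ LinearMap.ker (θ + LinearMap.id) := by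
        simp [LinearMap.mem_ker, map_add, hθe, hinv]
      exact ⟨(⟨e i + e (nve i), hk⟩ : LinearMap.ker (θ + LinearMap.id)) ⊗ₜ[ℂ]
        (⟨e i, trivial⟩ : (⊤ : Submodule ℂ L)), rfl⟩
end

section
/- Let λ ∈ h* be such that the Verma module M_λ is irreducible, V_r a finite-dimensional k-module, and φ_r : V_r → M̄_λ a nonzero k-intertwiner into the weight completion M̄_λ = Π_{μ≤λ} M_λ[μ]. Then the highest weight component of φ_r is nonzero: there exists v ∈ V_r with m_λ*(φ_r(v)) ≠ 0, where m_λ* is the linear functional on M̄_λ picking out the coefficient of the highest weight vector m_λ. Consequently the map hw : Hom_k(V_r, M̄_λ) → V_r*, φ_r ↦ (v ↦ m_λ*(φ_r v)), is injective. -/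
/-!
Let `χ` be a `k`-intertwiner whose highest weight component vanishes, and suppose `χ ≠ 0`.
Its weight support is nonempty and bounded by `λ`, so it has a maximal weight `m`. For
`x ∈ V` the component `w = χ(x)[m]` is killed by every `e_α`: the weight `m + α`
component of `χ(y_α x) = e_α χ(x) − e_{−α} χ(x)` vanishes by maximality of `m`, and it
equals `e_α w − e_{−α} χ(x)[m + 2α] = e_α w`. Irreducibility of `M_λ` forces `m = λ`,
contradicting the vanishing of the `λ` component. Injectivity of `hw` follows by
applying this to the difference of two intertwiners.
-/

section WeightCompletion

variable {R W M V ι : Type*} [Semiring R] [AddCommGroup M] [Module R M]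
  [AddCommGroup V] [Module R V]
  {P : W → M →ₗ[R] M} {E F : ι → M →ₗ[R] M} {σ : ι → V →ₗ[R] V} {χ ψ : V →ₗ[R] M}

def Intertwines (E F : ι → M →ₗ[R] M) (σ : ι → V →ₗ[R] V) (χ : V →ₗ[R] M) : Prop :=
  ∀ i x, χ (σ i x) = E i (χ x) - F i (χ x)

theorem Intertwines.sub (hχ : Intertwines E F σ χ) (hψ : Intertwines E F σ ψ) :
    Intertwines E F σ (χ - ψ) := by
  intro i x
  simp only [LinearMap.sub_apply, hχ i x, hψ i x, map_sub]
  abel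

def weightSupport (P : W → M →ₗ[R] M) (χ : V →ₗ[R] M) : Set W :=
  {μ | ∃ x, P μ (χ x) ≠ 0}

theorem proj_apply_eq_zero_of_notMem_weightSupport {μ : W} (hμ : μ ∉ weightSupport P χ)
    (x : V) : P μ (χ x) = 0 := by
  by_contra h
  exact hμ ⟨x, h⟩

theorem weightSupport_nonempty (hsep : ∀ v : M, (∀ μ, P μ v = 0) → v = 0) (hχ : χ ≠ 0) :
    (weightSupport P χ).Nonempty := by
  obtain ⟨x, hx⟩ : ∃ x, χ x ≠ 0 := by
    by_contra! h
    exact hχ (LinearMap.ext h)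
  by_contra hempty
  exact hx (hsep _ fun μ =>
    proj_apply_eq_zero_of_notMem_weightSupport (fun hμ => hempty ⟨μ, hμ⟩) x)

theorem weightSupport_subset_Iic [Preorder W] {lam : W} (hsupp : ∀ μ, ¬ μ ≤ lam → P μ = 0) :
    weightSupport P χ ⊆ Set.Iic lam := by
  rintro μ ⟨x, hx⟩
  by_contra hμ
  exact hx (by rw [hsupp μ hμ]; rfl)

theorem Intertwines.apply_proj_eq_zero_of_maximal [AddCommGroup W] [PartialOrder W]
    [IsOrderedAddMonoid W] {α : ι → W} (hα : ∀ i, 0 < α i)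
    (hE : ∀ i μ v, P μ (E i v) = E i (P (μ - α i) v))
    (hF : ∀ i μ v, P μ (F i v) = F i (P (μ + α i) v)) (hχ : Intertwines E F σ χ) {m : W}
    (hm : ∀ μ ∈ weightSupport P χ, ¬ m < μ) (i : ι) (x : V) : E i (P m (χ x)) = 0 := by
  have hvanish : ∀ μ, m < μ → ∀ y, P μ (χ y) = 0 := fun μ hlt =>
    proj_apply_eq_zero_of_notMem_weightSupport fun hμ => hm μ hμ hlt
  have hlt : m < m + α i := lt_add_of_pos_right m (hα i)
  have hlt₂ : m < m + α i + α i := hlt.trans (lt_add_of_pos_right _ (hα i))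
  calc E i (P m (χ x))
      = P (m + α i) (E i (χ x)) - P (m + α i) (F i (χ x)) := by
        rw [hE, hF, add_sub_cancel_right, hvanish _ hlt₂, map_zero, sub_zero]
    _ = P (m + α i) (χ (σ i x)) := by rw [hχ, map_sub]
    _ = 0 := hvanish _ hlt _

theorem Intertwines.eq_zero_of_proj_apply_eq_zero [AddCommGroup W] [PartialOrder W]
    [IsOrderedAddMonoid W] {α : ι → W} {lam : W} (hα : ∀ i, 0 < α i)
    (hPP : ∀ μ v, P μ (P μ v) = P μ v)
    (hsep : ∀ v : M, (∀ μ, P μ v = 0) → v = 0) (hsupp : ∀ μ, ¬ μ ≤ lam → P μ = 0)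
    (hE : ∀ i μ v, P μ (E i v) = E i (P (μ - α i) v))
    (hF : ∀ i μ v, P μ (F i v) = F i (P (μ + α i) v))
    (hmax : ∀ S : Set W, S.Nonempty → (∀ μ ∈ S, μ ≤ lam) → ∃ m ∈ S, ∀ μ ∈ S, ¬ m < μ)
    (hirr : ∀ μ, μ ≤ lam → ∀ v : M, P μ v = v → v ≠ 0 → (∀ i, E i v = 0) → μ = lam)
    (hχ : Intertwines E F σ χ) (hlam : ∀ x, P lam (χ x) = 0) : χ = 0 := by
  by_contra hne
  obtain ⟨m, ⟨x, hx⟩, hm⟩ :=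
    hmax _ (weightSupport_nonempty hsep hne) (weightSupport_subset_Iic hsupp)
  have hmlam : m = lam :=
    hirr m (weightSupport_subset_Iic hsupp ⟨x, hx⟩) _ (hPP m _) hx fun i =>
      hχ.apply_proj_eq_zero_of_maximal hα hE hF hm i x
  exact hx (hmlam ▸ hlam x)

end WeightCompletion

theorem stmt_15_general
    (W : Type*) [AddCommGroup W] [PartialOrder W] [IsOrderedAddMonoid W]
    (lamW : W)
    (ιR : Type*) (αr : ιR → W) (hα : ∀ i, 0 < αr i)
    (Mbar : Type*) [AddCommGroup Mbar] [Module ℂ Mbar]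
    (Pproj : W → (Mbar →ₗ[ℂ] Mbar))
    (hPP : ∀ μ v, Pproj μ (Pproj μ v) = Pproj μ v)
    (hPsep : ∀ v : Mbar, (∀ μ, Pproj μ v = 0) → v = 0)
    (hPsupp : ∀ μ, ¬ μ ≤ lamW → Pproj μ = 0)
    (Eop Fop : ιR → (Mbar →ₗ[ℂ] Mbar))
    (hE : ∀ i μ v, Pproj μ (Eop i v) = Eop i (Pproj (μ - αr i) v))
    (hF : ∀ i μ v, Pproj μ (Fop i v) = Fop i (Pproj (μ + αr i) v))
    (hmax : ∀ S : Set W, S.Nonempty → (∀ μ ∈ S, μ ≤ lamW) →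
      ∃ m ∈ S, ∀ μ ∈ S, ¬ m < μ)
    (hirr : ∀ μ, μ ≤ lamW → ∀ v : Mbar, Pproj μ v = v → v ≠ 0 →
      (∀ i, Eop i v = 0) → μ = lamW)
    (V : Type*) [AddCommGroup V] [Module ℂ V]
    (σv : ιR → (V →ₗ[ℂ] V))   -- the action of `y_{α_i}` on `V_r`
    (φ : V →ₗ[ℂ] Mbar)
    (hφ : ∀ i x, φ (σv i x) = Eop i (φ x) - Fop i (φ x)) :
    (φ ≠ 0 → ∃ x : V, Pproj lamW (φ x) ≠ 0)
    ∧ (∀ ψ : V →ₗ[ℂ] Mbar,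
        (∀ i x, ψ (σv i x) = Eop i (ψ x) - Fop i (ψ x)) →
        (∀ x, Pproj lamW (φ x) = Pproj lamW (ψ x)) → φ = ψ) := by
  have hzero : ∀ χ : V →ₗ[ℂ] Mbar, Intertwines Eop Fop σv χ →
      (∀ x, Pproj lamW (χ x) = 0) → χ = 0 := fun χ hχ =>
    hχ.eq_zero_of_proj_apply_eq_zero hα hPP hPsep hPsupp hE hF hmax hirr
  refine ⟨fun hne => ?_, fun ψ hψ hlam => ?_⟩
  · by_contra! h
    exact hne (hzero φ hφ h)
  · refine sub_eq_zero.mp (hzero _ (Intertwines.sub hφ hψ) fun x => ?_)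
    rw [LinearMap.sub_apply, map_sub, hlam, sub_self]

/-- Let `M̄ = M̄_λ` be the weight completion of an *irreducible* Verma module `M_λ` over a
complex semisimple Lie algebra, `V_r` a finite-dimensional `k`-module, and
`φ_r : V_r → M̄_λ` a nonzero `k`-intertwiner.  Then the highest weight component of
`φ_r` is nonzero, and consequently `hw : Hom_k(V_r, M̄_λ) → V_r*` is injective.

Encoding: the weight structure of `M̄` is given by a family of commuting projections
`Pproj μ` (projection onto the weight-`μ` component) indexed by an ordered abelian group
`W` of weights, with support in `{μ ≤ λ}` and elements separated by their components;
`Eop i`, `Fop i` are the actions of `e_{α_i}`, `e_{−α_i}` (positive roots `α_i > 0`),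
shifting weights by `±α_i`, and `y_{α_i} = e_{α_i} − e_{−α_i}` spans `k`.
`hmax` encodes that any nonempty set of weights `≤ λ` has a maximal element, and `hirr`
encodes irreducibility of `M_λ`: the only singular weight `≤ λ` is `λ` itself.
`m_λ*(w) ≠ 0` for `0 ≠ w ∈ M̄[λ]` corresponds to `Pproj λ w ≠ 0` since `M_λ[λ]` is
one-dimensional. -/
theorem stmt_15
    (W : Type*) [AddCommGroup W] [PartialOrder W] [IsOrderedAddMonoid W]
    (lamW : W)
    (ιR : Type*) (αr : ιR → W) (hα : ∀ i, 0 < αr i)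
    (Mbar : Type*) [AddCommGroup Mbar] [Module ℂ Mbar]
    (Pproj : W → (Mbar →ₗ[ℂ] Mbar))
    (hPP : ∀ μ v, Pproj μ (Pproj μ v) = Pproj μ v)
    (hPsep : ∀ v : Mbar, (∀ μ, Pproj μ v = 0) → v = 0)
    (hPsupp : ∀ μ, ¬ μ ≤ lamW → Pproj μ = 0)
    (Eop Fop : ιR → (Mbar →ₗ[ℂ] Mbar))
    (hE : ∀ i μ v, Pproj μ (Eop i v) = Eop i (Pproj (μ - αr i) v))
    (hF : ∀ i μ v, Pproj μ (Fop i v) = Fop i (Pproj (μ + αr i) v))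
    (hmax : ∀ S : Set W, S.Nonempty → (∀ μ ∈ S, μ ≤ lamW) →
      ∃ m ∈ S, ∀ μ ∈ S, ¬ m < μ)
    (hirr : ∀ μ, μ ≤ lamW → ∀ v : Mbar, Pproj μ v = v → v ≠ 0 →
      (∀ i, Eop i v = 0) → μ = lamW)
    (V : Type*) [AddCommGroup V] [Module ℂ V] [FiniteDimensional ℂ V]
    (σv : ιR → (V →ₗ[ℂ] V))   -- the action of `y_{α_i}` on `V_r`
    (φ : V →ₗ[ℂ] Mbar)
    (hφ : ∀ i x, φ (σv i x) = Eop i (φ x) - Fop i (φ x)) :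
    (φ ≠ 0 → ∃ x : V, Pproj lamW (φ x) ≠ 0)
    ∧ (∀ ψ : V →ₗ[ℂ] Mbar,
        (∀ i x, ψ (σv i x) = Eop i (ψ x) - Fop i (ψ x)) →
        (∀ x, Pproj lamW (φ x) = Pproj lamW (ψ x)) → φ = ψ) :=
  stmt_15_general W lamW ιR αr hα Mbar Pproj hPP hPsep hPsupp Eop Fop hE hF hmax hirr V σv φ hφ
end

section
/- Let g₀ be a split real semisimple Lie algebra with Iwasawa decomposition g₀ = k₀ ⊕ h₀ ⊕ n₀. Then for any λ ∈ h*, the Verma module M_λ over the complexification g is generated by its highest weight vector over U(k): M_λ = U(k) m_λ. Consequently, for any finite-dimensional k-module V_ℓ, the evaluation map ev : Hom_k(M_λ, V_ℓ) → V_ℓ, φ ↦ φ(m_λ), is injective. -/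
/-- Inductive set: `m` together with everything obtained by bracketing with elements of `kS`. -/
inductive genSet16 {L M : Type*} [LieRing L] [AddCommGroup M] [LieRingModule L M]
    (kS : Set L) (m : M) : M → Prop
  | base : genSet16 kS m m
  | brk (x : L) (w : M) : x ∈ kS → genSet16 kS m w → genSet16 kS m ⁅x, w⁆

/-- Let `g₀` be split real semisimple with Iwasawa decomposition `g = k ⊕ h ⊕ n` (here only
`g = k + h + n` is needed).  For any `λ ∈ h*`, the Verma module `M_λ` (a `g`-module
generated by a highest weight vector `m` with `n·m = 0` and `h` acting on `m` by `λ`) is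
generated by `m` over `U(k)`: every `ℂ`-subspace containing `m` and stable under `k` is
all of `M_λ`.  Consequently, for every finite-dimensional `k`-module `V_ℓ` the
evaluation map `ev : Hom_k(M_λ, V_ℓ) → V_ℓ`, `φ ↦ φ(m)`, is injective. -/
theorem stmt_16 (L : Type*) [LieRing L] [LieAlgebra ℂ L]
    (kS hS nS : LieSubalgebra ℂ L)
    (hIwa : ∀ z : L, ∃ xk ∈ kS, ∃ xh ∈ hS, ∃ xn ∈ nS, z = xk + xh + xn)
    (M : Type*) [AddCommGroup M] [Module ℂ M] [LieRingModule L M] [LieModule ℂ L M]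
    (m : M) (lam : L → ℂ)
    (hhw_n : ∀ x ∈ nS, ⁅x, m⁆ = 0)
    (hhw_h : ∀ x ∈ hS, ⁅x, m⁆ = lam x • m)
    (hgen : LieSubmodule.lieSpan ℂ L ({m} : Set M) = ⊤) :
    (∀ p : Submodule ℂ M, m ∈ p → (∀ x ∈ kS, ∀ v ∈ p, ⁅x, v⁆ ∈ p) → p = ⊤)
    ∧ (∀ (V : Type) (_ : AddCommGroup V) (_ : Module ℂ V) (_ : FiniteDimensional ℂ V)
        (πk : L → V →ₗ[ℂ] V) (φ ψ : M →ₗ[ℂ] V),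
        (∀ x ∈ kS, ∀ w : M, φ ⁅x, w⁆ = πk x (φ w)) →
        (∀ x ∈ kS, ∀ w : M, ψ ⁅x, w⁆ = πk x (ψ w)) →
        φ m = ψ m → φ = ψ) := by
  set S : Set M := {w | genSet16 (↑kS : Set L) m w} with hS'
  set W : Submodule ℂ M := Submodule.span ℂ S with hWdef
  have hmS : m ∈ S := genSet16.base
  have hkW : ∀ x ∈ kS, ∀ v ∈ W, ⁅x, v⁆ ∈ W := by
    intro x hx v hv
    refine Submodule.span_induction ?_ ?_ ?_ ?_ hv
    · intro w hw; exact Submodule.subset_span (genSet16.brk x w hx hw)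
    · simp
    · intro a b _ _ ha hb; rw [lie_add]; exact W.add_mem ha hb
    · intro c a _ ha; rw [lie_smul]; exact W.smul_mem c ha
  have hLgen : ∀ w ∈ S, ∀ z : L, ⁅z, w⁆ ∈ W := by
    intro w hw
    induction hw with
    | base =>
      intro z
      obtain ⟨xk, hxk, xh, hxh, xn, hxn, rfl⟩ := hIwa z
      rw [add_lie, add_lie, hhw_n xn hxn, hhw_h xh hxh, add_zero]
      exact W.add_mem (hkW xk hxk m (Submodule.subset_span hmS))
        (W.smul_mem _ (Submodule.subset_span hmS))
    | brk x w' hx hw' ih =>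
      intro z
      rw [leibniz_lie]
      exact W.add_mem (ih _) (hkW x hx _ (ih z))
  have hLW : ∀ z : L, ∀ v ∈ W, ⁅z, v⁆ ∈ W := by
    intro z v hv
    refine Submodule.span_induction (fun w hw => hLgen w hw z) ?_ ?_ ?_ hv
    · simp
    · intro a b _ _ ha hb; rw [lie_add]; exact W.add_mem ha hb
    · intro c a _ ha; rw [lie_smul]; exact W.smul_mem c ha
  -- W is a Lie submodule containing m, hence all of M
  have hWtop : W = ⊤ := by
    let W' : LieSubmodule ℂ L M :=
      { W with lie_mem := fun {z v} hv => hLW z v hv }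
    have h1 : LieSubmodule.lieSpan ℂ L ({m} : Set M) ≤ W' := by
      rw [LieSubmodule.lieSpan_le]
      intro w hw
      rcases hw with rfl
      exact Submodule.subset_span hmS
    rw [hgen] at h1
    have : W' = ⊤ := top_le_iff.mp h1
    have : (W' : Submodule ℂ M) = ⊤ := by rw [this]; rfl
    exact this
  have part1 : ∀ p : Submodule ℂ M, m ∈ p → (∀ x ∈ kS, ∀ v ∈ p, ⁅x, v⁆ ∈ p) → p = ⊤ := by
    intro p hmp hkp
    have hSp : S ⊆ p := by
      intro w hw
      induction hw with
      | base => exact hmp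
      | brk x w' hx _ ih => exact hkp x hx w' ih
    have : W ≤ p := Submodule.span_le.mpr hSp
    rw [hWtop] at this
    exact top_le_iff.mp this
  refine ⟨part1, ?_⟩
  intro V _ _ _ πk φ ψ hφ hψ hm
  have hker : LinearMap.ker (φ - ψ) = ⊤ := by
    apply part1
    · simp [LinearMap.mem_ker, hm, sub_eq_zero]
    · intro x hx v hv
      simp only [LinearMap.mem_ker, LinearMap.sub_apply] at hv ⊢
      rw [hφ x hx v, hψ x hx v]
      rw [sub_eq_zero] at hv ⊢
      rw [hv]
  ext w
  have : w ∈ LinearMap.ker (φ - ψ) := hker ▸ Submodule.mem_top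
  simpa [sub_eq_zero] using this
end

section
/- Let χ : k₀ → ℝ be a one-dimensional representation of the Lie algebra k₀ = Lie(K) for a split pair (g₀, θ₀), and let V be a g₀-module on which the Casimir Ω acts as c·id. If v ∈ V satisfies (e_α − e₋α)v = χ(y_α)v for all α ∈ R⁺, then for all a ∈ A_reg: (Σⱼ xⱼ² + ½ Σ_{α∈R} ((1+a^{−2α})/(1−a^{−2α})) t_α + Σ_{α∈R} (1/(a^{−α}−a^α)²) Π_{ε∈{±1}} (Ad_{a⁻¹}(y_α) − a^{−εα} χ(y_α))) v = c v, where the product means the composition (Ad_{a⁻¹}(y_α) − a^{−α}χ(y_α))(Ad_{a⁻¹}(y_α) − a^{α}χ(y_α)) of operators on V. -/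
/-!
With `Y = p⁻¹ • e - p • f` (that is, `Ad_{a⁻¹} y_α`) and `(e - f) v = χ v`, the two factors of the
product collapse: `(Y - p χ) v = (p⁻¹ - p) • e v` and then `(Y - p⁻¹ χ) e v = p⁻¹ • e f v - p • f e v`,
where in the second step `χ e v = e (χ v) = e (e - f) v`. Together with `t v = e f v - f e v`,
the coefficients of `e f v` and of `f e v` in each root term are both `1`, so the operator
reduces root by root to the Casimir element `Σ xⱼ² + Σ (e_α e_{-α} + e_{-α} e_α)`.
-/

section LieModule

variable {R L M : Type*} [CommRing R] [LieRing L] [LieAlgebra R L] [AddCommGroup M] [Module R M]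
  [LieRingModule L M] [LieModule R L M] {e f : L} {v : M} {χ : R}

theorem lie_smul_sub_smul_sub_smul_eq (hv : ⁅e, v⁆ - ⁅f, v⁆ = χ • v) (a b : R) :
    ⁅a • e - b • f, v⁆ - (b * χ) • v = (a - b) • ⁅e, v⁆ := by
  rw [mul_smul, ← hv, sub_lie, smul_lie, smul_lie]
  module

theorem lie_smul_sub_smul_lie_sub_smul_eq (hv : ⁅e, v⁆ - ⁅f, v⁆ = χ • v) (a b : R) :
    ⁅a • e - b • f, ⁅e, v⁆⁆ - (a * χ) • ⁅e, v⁆ = a • ⁅e, ⁅f, v⁆⁆ - b • ⁅f, ⁅e, v⁆⁆ := by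
  rw [mul_smul, ← lie_smul, ← hv, lie_sub, sub_lie, smul_lie, smul_lie]
  module

theorem lie_sub_smul_comp_lie_sub_smul_eq (hv : ⁅e, v⁆ - ⁅f, v⁆ = χ • v) (a b : R) :
    ⁅a • e - b • f, ⁅a • e - b • f, v⁆ - (b * χ) • v⁆ - (a * χ) • (⁅a • e - b • f, v⁆ - (b * χ) • v)
      = (a - b) • (a • ⁅e, ⁅f, v⁆⁆ - b • ⁅f, ⁅e, v⁆⁆) := by
  rw [lie_smul_sub_smul_sub_smul_eq hv, lie_smul, smul_comm (a * χ), ← smul_sub,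
    lie_smul_sub_smul_lie_sub_smul_eq hv]

end LieModule

theorem smul_sub_add_smul_smul_sub_smul_eq_add {K M : Type*} [Field K] [AddCommGroup M]
    [Module K M] {p : K} (hp : p - p⁻¹ ≠ 0) (A B : M) :
    ((1 + p⁻¹ ^ 2) / (1 - p⁻¹ ^ 2)) • (A - B) + (2 / (p⁻¹ - p) ^ 2) • ((p⁻¹ - p) • (p⁻¹ • A - p • B))
      = A + B := by
  have hp0 : p ≠ 0 := by rintro rfl; simp at hp
  have hsq : p ^ 2 - 1 ≠ 0 := by
    intro h; apply hp; field_simp; linear_combination h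
  have hsq' : 1 - p ^ 2 ≠ 0 := by rwa [← neg_sub, neg_ne_zero]
  have hsq'' : -1 + p ^ 2 ≠ 0 := by rwa [neg_add_eq_sub]
  match_scalars <;> field_simp <;> ring

theorem casimir_root_term_eq {K L M : Type*} [Field K] [LieRing L] [LieAlgebra K L]
    [AddCommGroup M] [Module K M] [LieRingModule L M] [LieModule K L M] {e f : L} {v : M}
    {χ p : K} (hv : ⁅e, v⁆ - ⁅f, v⁆ = χ • v) (hp : p - p⁻¹ ≠ 0) :
    ((1 + p⁻¹ ^ 2) / (1 - p⁻¹ ^ 2)) • ⁅⁅e, f⁆, v⁆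
      + (2 / (p⁻¹ - p) ^ 2) •
          (⁅p⁻¹ • e - p • f, ⁅p⁻¹ • e - p • f, v⁆ - (p * χ) • v⁆
            - (p⁻¹ * χ) • (⁅p⁻¹ • e - p • f, v⁆ - (p * χ) • v))
      = ⁅e, ⁅f, v⁆⁆ + ⁅f, ⁅e, v⁆⁆ := by
  rw [lie_sub_smul_comp_lie_sub_smul_eq hv, lie_lie,
    smul_sub_add_smul_smul_sub_smul_eq_add hp]

theorem stmt_18_general (L : Type*) [LieRing L] [LieAlgebra ℂ L]
    (V : Type*) [AddCommGroup V] [Module ℂ V] [LieRingModule L V] [LieModule ℂ L V]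
    (rk : ℕ) (x : Fin rk → L)
    (ι' : Type*) [Fintype ι'] (e f t : ι' → L)
    (hbr : ∀ i, ⁅e i, f i⁆ = t i)
    (c : ℝ)
    (hΩ : ∀ w : V,
      (∑ j, ⁅x j, ⁅x j, w⁆⁆) + ∑ i, (⁅e i, ⁅f i, w⁆⁆ + ⁅f i, ⁅e i, w⁆⁆) = (c : ℂ) • w)
    (χ : ι' → ℝ) (v : V)
    (hχ : ∀ i, ⁅e i, v⁆ - ⁅f i, v⁆ = (χ i : ℂ) • v)
    (p : ι' → ℂ) (hpreg : ∀ i, p i - (p i)⁻¹ ≠ 0) :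
    (∑ j, ⁅x j, ⁅x j, v⁆⁆)
      + ∑ i, ((1 + ((p i)⁻¹)^2)/(1 - ((p i)⁻¹)^2)) • ⁅t i, v⁆
      + ∑ i, (2/((p i)⁻¹ - p i)^2) •
          (⁅(p i)⁻¹ • e i - p i • f i,
              ⁅(p i)⁻¹ • e i - p i • f i, v⁆ - (p i * (χ i : ℂ)) • v⁆
            - ((p i)⁻¹ * (χ i : ℂ)) •
              (⁅(p i)⁻¹ • e i - p i • f i, v⁆ - (p i * (χ i : ℂ)) • v))
      = (c : ℂ) • v := by
  simp only [← hbr]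
  rw [add_assoc, ← Finset.sum_add_distrib, ← hΩ v]
  congr 1
  exact Finset.sum_congr rfl fun i _ => casimir_root_term_eq (hχ i) (hpreg i)

/-- Let `χ ∈ ch(k₀)` be a one-dimensional real representation of `k₀` (recorded through its
values `χ i = χ(y_{α_i})` on the basis `y_α = e_α − e_{−α}`, `α ∈ R⁺`), and let `V` be a
`g₀`-module on which the Casimir `Ω = Σⱼ xⱼ² + Σ_{α∈R} e_α e_{−α}` acts as `c·id`
(`c ∈ ℝ`).  If `v ∈ V^χ`, i.e. `(e_α − e_{−α})v = χ(y_α)v` for all `α ∈ R⁺`, then for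
all `a ∈ A_reg` (with `p i = a^{α_i} ≠ 0` and `a^{α_i} − a^{−α_i} ≠ 0`, and
`Ad_{a⁻¹}(y_α) = a^{−α} e_α − a^{α} e_{−α}`):
`(Σⱼ xⱼ² + ½ Σ_{α∈R} ((1+a^{−2α})/(1−a^{−2α})) t_α
  + Σ_{α∈R} (1/(a^{−α}−a^{α})²) Π_{ε∈{±1}} (Ad_{a⁻¹}(y_α) − a^{−εα} χ(y_α))) v = c v`.
Positive roots are indexed by `ι'` (`e i`, `f i = e_{−α_i}`, `t i`); the sums over `R`
are realised as sums over `R⁺` of the two (equal, resp. paired) `±α` contributions. -/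
theorem stmt_18 (L : Type*) [LieRing L] [LieAlgebra ℂ L]
    (V : Type*) [AddCommGroup V] [Module ℂ V] [LieRingModule L V] [LieModule ℂ L V]
    (rk : ℕ) (x : Fin rk → L)
    (ι' : Type*) [Fintype ι'] (e f t : ι' → L)
    (hbr : ∀ i, ⁅e i, f i⁆ = t i)
    (c : ℝ)
    (hΩ : ∀ w : V,
      (∑ j, ⁅x j, ⁅x j, w⁆⁆) + ∑ i, (⁅e i, ⁅f i, w⁆⁆ + ⁅f i, ⁅e i, w⁆⁆) = (c : ℂ) • w)
    (χ : ι' → ℝ) (v : V)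
    (hχ : ∀ i, ⁅e i, v⁆ - ⁅f i, v⁆ = (χ i : ℂ) • v)
    (p : ι' → ℂ) (hp0 : ∀ i, p i ≠ 0) (hpreg : ∀ i, p i - (p i)⁻¹ ≠ 0) :
    (∑ j, ⁅x j, ⁅x j, v⁆⁆)
      + ∑ i, ((1 + ((p i)⁻¹)^2)/(1 - ((p i)⁻¹)^2)) • ⁅t i, v⁆
      + ∑ i, (2/((p i)⁻¹ - p i)^2) •
          (⁅(p i)⁻¹ • e i - p i • f i,
              ⁅(p i)⁻¹ • e i - p i • f i, v⁆ - (p i * (χ i : ℂ)) • v⁆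
            - ((p i)⁻¹ * (χ i : ℂ)) •
              (⁅(p i)⁻¹ • e i - p i • f i, v⁆ - (p i * (χ i : ℂ)) • v))
      = (c : ℂ) • v :=
  stmt_18_general L V rk x ι' e f t hbr c hΩ χ v hχ p hpreg
end
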